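/- arXiv:0811.4400 — 4 statements merged into one kernel-verified Lean document; each statement's English description precedes it below -/
import Mathlib

section
/- Let (x_n)_{n∈ℕ} be a sequence with x_0 = 0 and x_n > 0 for n ≥ 1, and suppose w : (0,∞) → [0,∞) is a measurable function solving the Stieltjes moment problem for the factorials, i.e. ∫₀^∞ t^n w(t) dt = x_n! for all n ∈ ℕ. Then for all n, m ∈ ℕ: (1/π) ∫_ℂ w(|z|²) z^n (conj z)^m dA(z) = δ_{n,m} · x_n!. Consequently the coherent states v_z = N(|z|²)^{−1/2} Σ_n (z^n/√(x_n!)) e_n resolve the identity on ℓ²(ℕ,ℂ) with respect to the measure w(|z|²) N(|z|²) dA(z)/π. -/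
/-!
In polar coordinates `∫_ℂ w(|z|²) zⁿ z̄ᵐ dA` splits as
`(∫₀^∞ r^(n+m+1) w(r²) dr) (∫ e^{i(n-m)θ} dθ)`; the angular factor is `2π δ_{nm}` and the
substitution `t = r²` turns the radial one into half the `n`-th moment of `w`.

For the coherent states the weight `w(t) N(t) N(t)⁻¹` equals `w(t)` wherever the series `N(t)`
converges. Where it diverges `gexp` is a junk value, but then `w` carries no mass beyond `t`:
mass `W > 0` beyond `s > t` gives `sᵏ W ≤ x_k!`, and `Σ tᵏ / x_k!` converges by comparison with
a geometric series.
-/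

open MeasureTheory

/-- The generalized factorial `xₙ! = x 1 * x 2 * ⋯ * x n` (with `x₀! = 1`). -/
noncomputable def gfact (x : ℕ → ℝ) (n : ℕ) : ℝ := ∏ k ∈ Finset.range n, x (k + 1)

/-- The associated exponential `N(t) = Σ tⁿ/xₙ!`. -/
noncomputable def gexp (x : ℕ → ℝ) (t : ℝ) : ℝ := ∑' n : ℕ, t ^ n / gfact x n

/-- The coherent state coefficients `(e_n , v_z) = N(|z|²)^{-1/2} zⁿ/√(xₙ!)`. -/
noncomputable def gcoh (x : ℕ → ℝ) (z : ℂ) (n : ℕ) : ℂ :=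
  (Real.sqrt (gexp x (‖z‖ ^ 2)))⁻¹ * z ^ n / Real.sqrt (gfact x n)

open Set Filter ComplexConjugate

theorem integral_exp_int_mul_mul_I_Ioo (k : ℤ) :
    ∫ θ in Ioo (-Real.pi) Real.pi, Complex.exp (k * θ * Complex.I) =
      if k = 0 then ((2 * Real.pi : ℝ) : ℂ) else 0 := by
  rw [← integral_Ioc_eq_integral_Ioo,
    ← intervalIntegral.integral_of_le (by linarith [Real.pi_pos])]
  split_ifs with hk
  · simp [hk]
    ring
  · have hc : (k : ℂ) * Complex.I ≠ 0 := by simp [hk]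
    -- the endpoints differ by `k` full turns
    have hturn : (k : ℂ) * Complex.I * Real.pi =
        (k : ℂ) * Complex.I * (-Real.pi : ℝ) + k * (2 * Real.pi * Complex.I) := by
      push_cast; ring
    simp_rw [mul_right_comm _ _ Complex.I]
    rw [integral_exp_mul_complex hc, hturn, Complex.exp_add, Complex.exp_int_mul_two_pi_mul_I,
      mul_one, sub_self, zero_div]

theorem integral_Ioi_pow_mul_comp_sq (G : ℝ → ℝ) (n : ℕ) :
    ∫ r in Ioi (0 : ℝ), r ^ (2 * n + 1) * G (r ^ 2) =
      (∫ t in Ioi (0 : ℝ), t ^ n * G t) / 2 := by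
  rw [← integral_div, ← integral_comp_rpow_Ioi_of_pos (g := fun t => t ^ n * G t / 2) two_pos]
  refine setIntegral_congr_fun measurableSet_Ioi fun r _ => ?_
  norm_num [smul_eq_mul]
  ring

theorem polarCoord_symm_pow_mul_conj_pow (r θ : ℝ) (n m : ℕ) :
    Complex.polarCoord.symm (r, θ) ^ n * conj (Complex.polarCoord.symm (r, θ)) ^ m =
      ((r ^ (n + m) : ℝ) : ℂ) * Complex.exp (((n : ℤ) - m : ℤ) * θ * Complex.I) := by
  have hz : Complex.polarCoord.symm (r, θ) = r * Complex.exp (θ * Complex.I) := by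
    rw [Complex.polarCoord_symm_apply, Complex.exp_mul_I, ← Complex.ofReal_cos,
      ← Complex.ofReal_sin]
  have hconj : conj ((r : ℂ) * Complex.exp (θ * Complex.I)) =
      r * Complex.exp (-(θ * Complex.I)) := by
    rw [map_mul, Complex.conj_ofReal, ← Complex.exp_conj, map_mul, Complex.conj_ofReal,
      Complex.conj_I, mul_neg]
  have hexp : Complex.exp (((n : ℤ) - m : ℤ) * θ * Complex.I) =
      Complex.exp (θ * Complex.I) ^ n * Complex.exp (-(θ * Complex.I)) ^ m := by
    rw [← Complex.exp_nat_mul, ← Complex.exp_nat_mul, ← Complex.exp_add]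
    push_cast
    ring_nf
  rw [hz, hconj, hexp]
  push_cast
  ring

theorem one_div_pi_mul_integral_mul_pow_mul_conj_pow (G : ℝ → ℝ) (n m : ℕ) :
    (1 / (Real.pi : ℂ)) * ∫ z : ℂ, (G (‖z‖ ^ 2) : ℂ) * z ^ n * conj z ^ m =
      if n = m then ((∫ t in Ioi (0 : ℝ), t ^ n * G t : ℝ) : ℂ) else 0 := by
  have hpolar : EqOn
      (fun p : ℝ × ℝ => p.1 • ((G (‖Complex.polarCoord.symm p‖ ^ 2) : ℂ) *
        Complex.polarCoord.symm p ^ n * conj (Complex.polarCoord.symm p) ^ m))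
      (fun p => ((p.1 ^ (n + m + 1) * G (p.1 ^ 2) : ℝ) : ℂ) *
        Complex.exp (((n : ℤ) - m : ℤ) * p.2 * Complex.I))
      (Ioi 0 ×ˢ Ioo (-Real.pi) Real.pi) := by
    rintro ⟨r, θ⟩ ⟨hr, -⟩
    simp only [Complex.norm_polarCoord_symm, abs_of_pos (show 0 < r from hr), mul_assoc,
      polarCoord_symm_pow_mul_conj_pow, Complex.real_smul]
    push_cast
    ring
  rw [← Complex.integral_comp_polarCoord_symm, show polarCoord.target = Ioi (0 : ℝ) ×ˢ
      Ioo (-Real.pi) Real.pi from rfl, setIntegral_congr_fun (measurableSet_Ioi.prod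
      measurableSet_Ioo) hpolar, Measure.volume_eq_prod,
    setIntegral_prod_mul (fun r => ((r ^ (n + m + 1) * G (r ^ 2) : ℝ) : ℂ))
      (fun θ : ℝ => Complex.exp (((n : ℤ) - m : ℤ) * θ * Complex.I)),
    integral_exp_int_mul_mul_I_Ioo]
  simp only [sub_eq_zero, Nat.cast_inj]
  split_ifs with h
  · subst h
    rw [integral_complex_ofReal, ← two_mul, integral_Ioi_pow_mul_comp_sq]
    push_cast
    field_simp
  · rw [mul_zero, mul_zero]

theorem measure_eq_zero_of_measure_inter_Ioi_eq_zero {μ : Measure ℝ} [NullSingletonClass μ]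
    {S : Set ℝ}
    (h : ∀ t ∈ S, ∀ s, t < s → μ (S ∩ Ioi s) = 0) : μ S = 0 := by
  have hcover : S ⊆ {t | IsLeast S t} ∪ ⋃ (q : ℚ) (_ : ∃ t ∈ S, t < q), S ∩ Ioi (q : ℝ) := by
    intro u hu
    by_cases hleast : IsLeast S u
    · exact Or.inl hleast
    · obtain ⟨t, ht, htu⟩ : ∃ t ∈ S, t < u := by
        simpa [IsLeast, hu, lowerBounds] using hleast
      obtain ⟨q, htq, hqu⟩ := exists_rat_btwn htu
      exact Or.inr (mem_iUnion₂.mpr ⟨q, ⟨t, ht, htq⟩, hu, hqu⟩)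
  refine measure_mono_null hcover (measure_union_null ?_ (measure_iUnion_null fun q =>
    measure_iUnion_null fun ⟨t, ht, htq⟩ => h t ht q htq))
  exact Set.Subsingleton.measure_zero (fun a ha b hb => ha.unique hb) μ

theorem pow_mul_setIntegral_Ioi_le {w : ℝ → ℝ} (hw_nonneg : ∀ t, 0 < t → 0 ≤ w t)
    {k : ℕ} (hw : IntegrableOn w (Ioi 0)) (hwk : IntegrableOn (fun t => t ^ k * w t) (Ioi 0))
    {s : ℝ} (hs : 0 ≤ s) :
    s ^ k * ∫ u in Ioi s, w u ≤ ∫ u in Ioi 0, u ^ k * w u := by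
  have hsub : Ioi s ⊆ Ioi 0 := Ioi_subset_Ioi hs
  calc s ^ k * ∫ u in Ioi s, w u = ∫ u in Ioi s, s ^ k * w u := (integral_const_mul _ _).symm
    _ ≤ ∫ u in Ioi s, u ^ k * w u :=
      setIntegral_mono_on ((hw.mono_set hsub).const_mul _) (hwk.mono_set hsub) measurableSet_Ioi
        fun u hu => mul_le_mul_of_nonneg_right (pow_le_pow_left₀ hs (le_of_lt hu) k)
          (hw_nonneg u (hs.trans_lt hu))
    _ ≤ ∫ u in Ioi 0, u ^ k * w u :=
      setIntegral_mono_set hwk ((ae_restrict_mem measurableSet_Ioi).mono fun u hu =>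
        mul_nonneg (pow_nonneg (le_of_lt hu) _) (hw_nonneg u hu)) hsub.eventuallyLE

theorem summable_pow_div_of_pow_mul_le {c : ℕ → ℝ} {t s W : ℝ} (ht : 0 ≤ t) (hts : t < s)
    (hW : 0 < W) (h : ∀ k, s ^ k * W ≤ c k) : Summable fun k => t ^ k / c k := by
  have hs : 0 < s := ht.trans_lt hts
  refine Summable.of_nonneg_of_le (fun k => div_nonneg (pow_nonneg ht _)
    ((mul_pos (pow_pos hs k) hW).le.trans (h k))) (fun k => ?_)
    ((summable_geometric_of_lt_one (div_nonneg ht hs.le) ((div_lt_one hs).mpr hts)).div_const W)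
  calc t ^ k / c k ≤ t ^ k / (s ^ k * W) :=
        div_le_div_of_nonneg_left (pow_nonneg ht _) (mul_pos (pow_pos hs _) hW) (h k)
    _ = (t / s) ^ k / W := by rw [div_pow, div_div]

theorem measure_not_summable_ne_zero_eq_zero {w : ℝ → ℝ} {c : ℕ → ℝ}
    (hw_nonneg : ∀ t, 0 < t → 0 ≤ w t)
    (hw_int : ∀ n : ℕ, IntegrableOn (fun t => t ^ n * w t) (Ioi 0))
    (hw_mom : ∀ n : ℕ, ∫ t in Ioi (0 : ℝ), t ^ n * w t = c n) :
    volume {t : ℝ | 0 < t ∧ ¬ Summable (fun k => t ^ k / c k) ∧ w t ≠ 0} = 0 := by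
  have hw : IntegrableOn w (Ioi 0) := by simpa using hw_int 0
  refine measure_eq_zero_of_measure_inter_Ioi_eq_zero fun t ⟨ht, hns, _⟩ s hts => ?_
  have hs : 0 < s := ht.trans hts
  have hw_nonneg_s : 0 ≤ᵐ[volume.restrict (Ioi s)] w :=
    (ae_restrict_mem measurableSet_Ioi).mono fun u hu => hw_nonneg u (hs.trans hu)
  have hmass : ∫ u in Ioi s, w u = 0 := by
    refine ((integral_nonneg_of_ae hw_nonneg_s).eq_of_not_lt fun hpos => hns ?_).symm
    exact summable_pow_div_of_pow_mul_le ht.le hts hpos fun k =>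
      (pow_mul_setIntegral_Ioi_le hw_nonneg hw (hw_int k) hs.le).trans_eq (hw_mom k)
  have hzero := (setIntegral_eq_zero_iff_of_nonneg_ae hw_nonneg_s
    (hw.mono_set (Ioi_subset_Ioi hs.le))).mp hmass
  rw [EventuallyEq, ae_restrict_iff' measurableSet_Ioi, ae_iff] at hzero
  exact measure_mono_null (fun u ⟨⟨_, _, hwu⟩, hsu⟩ => fun h => hwu (h hsu)) hzero

theorem gfact_pos {x : ℕ → ℝ} (hpos : ∀ n, 1 ≤ n → 0 < x n) (n : ℕ) : 0 < gfact x n :=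
  Finset.prod_pos fun i _ => hpos (i + 1) (Nat.le_add_left 1 i)

theorem one_le_gexp {x : ℕ → ℝ} (hpos : ∀ n, 1 ≤ n → 0 < x n) {t : ℝ} (ht : 0 ≤ t)
    (hsum : Summable fun k => t ^ k / gfact x k) : 1 ≤ gexp x t := by
  simpa [gexp, gfact] using
    hsum.le_tsum 0 fun k _ => div_nonneg (pow_nonneg ht k) (gfact_pos hpos k).le

theorem integral_pow_mul_gexp_mul_inv_sqrt_sq_eq_gfact {x : ℕ → ℝ} {w : ℝ → ℝ}
    (hpos : ∀ n, 1 ≤ n → 0 < x n) (hw_nonneg : ∀ t, 0 < t → 0 ≤ w t)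
    (hw_int : ∀ n : ℕ, IntegrableOn (fun t => t ^ n * w t) (Ioi 0))
    (hw_mom : ∀ n : ℕ, ∫ t in Ioi (0 : ℝ), t ^ n * w t = gfact x n) (n : ℕ) :
    ∫ t in Ioi 0, t ^ n * (w t * (gexp x t * (√(gexp x t))⁻¹ ^ 2)) = gfact x n := by
  have hnull := measure_not_summable_ne_zero_eq_zero hw_nonneg hw_int hw_mom
  rw [← hw_mom]
  refine integral_congr_ae ?_
  filter_upwards [ae_restrict_mem measurableSet_Ioi,
    ae_restrict_of_ae (measure_eq_zero_iff_ae_notMem.mp hnull)] with t ht hgood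
  by_cases hsum : Summable fun k => t ^ k / gfact x k
  · have hN : 0 < gexp x t := zero_lt_one.trans_le (one_le_gexp hpos (le_of_lt ht) hsum)
    rw [inv_pow, Real.sq_sqrt hN.le, mul_inv_cancel₀ hN.ne', mul_one]
  · have hw0 : w t = 0 := by
      by_contra hw0
      exact hgood ⟨ht, hsum, hw0⟩
    rw [hw0, zero_mul, mul_zero]

theorem stmt_3_general (x : ℕ → ℝ) (hpos : ∀ n, 1 ≤ n → 0 < x n)
    (w : ℝ → ℝ) (hw_nonneg : ∀ t, 0 < t → 0 ≤ w t)
    (hw_int : ∀ n : ℕ, IntegrableOn (fun t => t ^ n * w t) (Set.Ioi 0))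
    (hw_mom : ∀ n : ℕ, ∫ t in Set.Ioi (0 : ℝ), t ^ n * w t = gfact x n) :
    (∀ n m : ℕ,
      (1 / (Real.pi : ℂ)) *
          ∫ z : ℂ, (w (‖z‖ ^ 2) : ℂ) * z ^ n * (starRingEnd ℂ) z ^ m =
        if n = m then (gfact x n : ℂ) else 0) ∧
    (∀ n m : ℕ,
      (1 / (Real.pi : ℂ)) *
          ∫ z : ℂ, ((w (‖z‖ ^ 2) * gexp x (‖z‖ ^ 2) : ℝ) : ℂ) *
            (gcoh x z n * (starRingEnd ℂ) (gcoh x z m)) =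
        if n = m then 1 else 0) := by
  refine ⟨fun n m => ?_, fun n m => ?_⟩
  · rw [one_div_pi_mul_integral_mul_pow_mul_conj_pow, hw_mom]
  set G : ℝ → ℝ := fun t =>
    w t * (gexp x t * (√(gexp x t))⁻¹ ^ 2) / (√(gfact x n) * √(gfact x m))
  have hintegrand : ∀ z : ℂ, ((w (‖z‖ ^ 2) * gexp x (‖z‖ ^ 2) : ℝ) : ℂ) *
      (gcoh x z n * conj (gcoh x z m)) = (G (‖z‖ ^ 2) : ℂ) * z ^ n * conj z ^ m := by
    intro z
    simp only [gcoh, G, map_mul, map_div₀, map_pow, Complex.conj_ofReal]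
    push_cast
    ring
  simp_rw [hintegrand]
  rw [one_div_pi_mul_integral_mul_pow_mul_conj_pow G]
  split_ifs with h
  · subst h
    simp_rw [G, Real.mul_self_sqrt (gfact_pos hpos n).le, mul_div_assoc', integral_div]
    rw [integral_pow_mul_gexp_mul_inv_sqrt_sq_eq_gfact hpos hw_nonneg hw_int hw_mom,
      div_self (gfact_pos hpos n).ne', Complex.ofReal_one]
  · rfl

/-- If `w` solves the Stieltjes moment problem for the generalized
factorials, i.e. `∫₀^∞ tⁿ w(t) dt = xₙ!`, then for all `n m`:
`(1/π) ∫_ℂ w(|z|²) zⁿ (conj z)ᵐ dA(z) = δ_{n,m} xₙ!`, and consequently the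
coherent states `v_z = N(|z|²)^{-1/2} Σ zⁿ/√(xₙ!) eₙ` resolve the identity on
`ℓ²(ℕ,ℂ)` with respect to `w(|z|²) N(|z|²) dA(z)/π`, in matrix-element form. -/
theorem stmt_3 (x : ℕ → ℝ) (hx0 : x 0 = 0) (hpos : ∀ n, 1 ≤ n → 0 < x n)
    (w : ℝ → ℝ) (hw_meas : Measurable w) (hw_nonneg : ∀ t, 0 < t → 0 ≤ w t)
    (hw_int : ∀ n : ℕ, IntegrableOn (fun t => t ^ n * w t) (Set.Ioi 0))
    (hw_mom : ∀ n : ℕ, ∫ t in Set.Ioi (0 : ℝ), t ^ n * w t = gfact x n) :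
    (∀ n m : ℕ,
      (1 / (Real.pi : ℂ)) *
          ∫ z : ℂ, (w (‖z‖ ^ 2) : ℂ) * z ^ n * (starRingEnd ℂ) z ^ m =
        if n = m then (gfact x n : ℂ) else 0) ∧
    (∀ n m : ℕ,
      (1 / (Real.pi : ℂ)) *
          ∫ z : ℂ, ((w (‖z‖ ^ 2) * gexp x (‖z‖ ^ 2) : ℝ) : ℂ) *
            (gcoh x z n * (starRingEnd ℂ) (gcoh x z m)) =
        if n = m then 1 else 0) :=
  stmt_3_general x hpos w hw_nonneg hw_int hw_mom
end

section
/- (Euler integral representation of the Kummer function) For all real a > 0, ε > 0, and every t ∈ ℝ: Σ_{n=0}^∞ (∏_{k=0}^{n−1} (a+k)/(a+ε+k)) · t^n/n! = (Γ(a+ε)/(Γ(a) Γ(ε))) ∫₀¹ e^{t u} u^{a−1} (1−u)^{ε−1} du; i.e., ₁F₁(a; a+ε; t) admits the stated Euler-type integral representation. -/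
/-!
Expand `e^{tu} = Σ (tu)ⁿ/n!` under the integral; the series is dominated by `e^{|t|}` times
the integrable beta weight `u^{a-1}(1-u)^{ε-1}`, so it can be integrated termwise. The `n`-th
moment of the weight is `B(a+n, ε)`, and `B(a+n, ε)/B(a, ε) = (a)ₙ/(a+ε)ₙ` because
`Γ(x+n) = (x)ₙ Γ(x)`.
-/

open MeasureTheory Set ProbabilityTheory
open scoped Nat

theorem Real.Gamma_add_nat_eq_prod_mul_Gamma {x : ℝ} (hx : ∀ k : ℕ, x + k ≠ 0) (n : ℕ) :
    Real.Gamma (x + n) = (∏ k ∈ Finset.range n, (x + k)) * Real.Gamma x := by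
  induction n with
  | zero => simp
  | succ n ih =>
    rw [Nat.cast_succ, ← add_assoc, Real.Gamma_add_one (hx n), ih, Finset.prod_range_succ]
    ring

theorem Real.hasSum_pow_div_factorial (x : ℝ) :
    HasSum (fun n : ℕ ↦ x ^ n / n !) (Real.exp x) := by
  rw [Real.exp_eq_exp_ℝ]
  exact NormedSpace.expSeries_div_hasSum_exp x

namespace ProbabilityTheory

variable {α β : ℝ}

theorem betaPDFReal_eq_indicator (α β : ℝ) :
    betaPDFReal α β =
      (Ioo 0 1).indicator fun x ↦ (beta α β)⁻¹ * (x ^ (α - 1) * (1 - x) ^ (β - 1)) := by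
  ext x
  simp only [betaPDFReal, indicator, mem_Ioo, one_div, mul_assoc]

theorem integral_betaPDFReal (hα : 0 < α) (hβ : 0 < β) : ∫ x, betaPDFReal α β x = 1 := by
  rw [integral_eq_lintegral_of_nonneg_ae
    (.of_forall fun x ↦ ?_) (measurable_betaPDFReal α β).aestronglyMeasurable]
  · exact (ENNReal.toReal_eq_one_iff _).mpr (lintegral_betaPDF_eq_one hα hβ)
  · by_cases hx : 0 < x ∧ x < 1
    · exact (betaPDFReal_pos hx.1 hx.2 hα hβ).le
    · simp [betaPDFReal, hx]

theorem integrableOn_beta_kernel (hα : 0 < α) (hβ : 0 < β) :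
    IntegrableOn (fun x : ℝ ↦ x ^ (α - 1) * (1 - x) ^ (β - 1)) (Ioo 0 1) := by
  have h := Integrable.of_integral_ne_zero (integral_betaPDFReal hα hβ ▸ one_ne_zero)
  rw [betaPDFReal_eq_indicator, integrable_indicator_iff measurableSet_Ioo] at h
  have h' := h.const_mul (beta α β)
  simp only [← mul_assoc, mul_inv_cancel₀ (beta_pos hα hβ).ne', one_mul] at h'
  exact h'

theorem integral_beta_kernel (hα : 0 < α) (hβ : 0 < β) :
    ∫ x in Ioo 0 1, x ^ (α - 1) * (1 - x) ^ (β - 1) = beta α β := by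
  have h := integral_betaPDFReal hα hβ
  rw [betaPDFReal_eq_indicator, integral_indicator measurableSet_Ioo, integral_const_mul,
    inv_mul_eq_one₀ (beta_pos hα hβ).ne'] at h
  exact h.symm

theorem integral_pow_mul_beta_kernel (hα : 0 < α) (hβ : 0 < β) (n : ℕ) :
    ∫ x in Ioo 0 1, x ^ n * (x ^ (α - 1) * (1 - x) ^ (β - 1)) = beta (α + n) β := by
  rw [← integral_beta_kernel (by positivity) hβ]
  refine setIntegral_congr_fun measurableSet_Ioo fun x hx ↦ ?_
  rw [← mul_assoc, ← Real.rpow_natCast, ← Real.rpow_add hx.1]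
  ring_nf

theorem beta_add_nat_div_beta (hα : 0 < α) (hβ : 0 < β) (n : ℕ) :
    beta (α + n) β / beta α β = ∏ k ∈ Finset.range n, (α + k) / (α + β + k) := by
  have hpos (x : ℝ) (hx : 0 < x) (k : ℕ) : x + k ≠ 0 := by positivity
  rw [beta, beta, add_right_comm, Real.Gamma_add_nat_eq_prod_mul_Gamma (hpos α hα),
    Real.Gamma_add_nat_eq_prod_mul_Gamma (hpos (α + β) (by positivity)), Finset.prod_div_distrib]
  have := Real.Gamma_pos_of_pos hα
  have := Real.Gamma_pos_of_pos hβ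
  have := Real.Gamma_pos_of_pos (add_pos hα hβ)
  have : 0 < ∏ k ∈ Finset.range n, (α + β + k) := Finset.prod_pos fun k _ ↦ by positivity
  field_simp

end ProbabilityTheory

theorem hasSum_integral_exp_mul {μ : Measure ℝ} {w : ℝ → ℝ} (hw : Integrable w μ)
    (hμ : ∀ᵐ u ∂μ, |u| ≤ 1) (t : ℝ) :
    HasSum (fun n : ℕ ↦ t ^ n / n ! * ∫ u, u ^ n * w u ∂μ)
      (∫ u, Real.exp (t * u) * w u ∂μ) := by
  have hterm (n : ℕ) (u : ℝ) : (t * u) ^ n / n ! * w u = t ^ n / n ! * (u ^ n * w u) := by ring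
  simp_rw [← integral_const_mul, ← hterm]
  refine hasSum_integral_of_dominated_convergence (fun n u ↦ |t| ^ n / n ! * |w u|)
    (fun n ↦ ?_) (fun n ↦ ?_) (.of_forall fun u ↦ ?_) ?_ (.of_forall fun u ↦ ?_)
  · exact (((continuous_const.mul continuous_id).pow n).div_const _).aestronglyMeasurable.mul
      hw.aestronglyMeasurable
  · filter_upwards [hμ] with u hu
    rw [norm_mul, norm_div, norm_pow, Real.norm_eq_abs, Real.norm_eq_abs, Real.norm_eq_abs,
      abs_mul, mul_pow, Nat.abs_cast]
    gcongr
    exact mul_le_of_le_one_right (by positivity) (pow_le_one₀ (abs_nonneg u) hu)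
  · exact (Real.summable_pow_div_factorial |t|).mul_right _
  · simp_rw [tsum_mul_right, (Real.hasSum_pow_div_factorial |t|).tsum_eq]
    exact hw.abs.const_mul _
  · exact (Real.hasSum_pow_div_factorial (t * u)).mul_right (w u)

/-- Euler integral representation of the Kummer function: for
all real `a > 0`, `ε > 0` and every `t`,
`Σₙ ((a)ₙ/(a+ε)ₙ) tⁿ/n! = (Γ(a+ε)/(Γ(a)Γ(ε))) ∫₀¹ e^{tu} u^{a−1} (1−u)^{ε−1} du`,
where `(a)ₙ = a(a+1)⋯(a+n−1)` is the Pochhammer symbol. -/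
theorem stmt_12 (a ε : ℝ) (ha : 0 < a) (hε : 0 < ε) (t : ℝ) :
    ∑' n : ℕ, (∏ k ∈ Finset.range n, (a + k) / (a + ε + k)) * t ^ n / (n.factorial : ℝ) =
      (Real.Gamma (a + ε) / (Real.Gamma a * Real.Gamma ε)) *
        ∫ u in Set.Ioo (0 : ℝ) 1, Real.exp (t * u) * u ^ (a - 1) * (1 - u) ^ (ε - 1) := by
  have hunit : ∀ᵐ u ∂volume.restrict (Ioo (0 : ℝ) 1), |u| ≤ 1 := by
    filter_upwards [ae_restrict_mem measurableSet_Ioo] with u hu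
    exact abs_le.2 ⟨by linarith [hu.1], hu.2.le⟩
  have hsum := (hasSum_integral_exp_mul (integrableOn_beta_kernel ha hε) hunit t).mul_left
    (beta a ε)⁻¹
  simp_rw [integral_pow_mul_beta_kernel ha hε, ← mul_assoc] at hsum
  rw [← inv_div, ← beta, ← hsum.tsum_eq]
  refine tsum_congr fun n ↦ ?_
  rw [← beta_add_nat_div_beta ha hε]
  ring
end

section
/- Let q ≥ 1 be an integer and b_1, …, b_q real numbers with b_i < 1 for all i. Define the sequence x_0 = 0 and x_n = (∏_{i=1}^q (n − b_i)) / n^{q−1} for n ≥ 1. Then the generalized factorials are given by x_n! = (∏_{i=1}^q Γ(1 − b_i + n)/Γ(1 − b_i)) / (n!)^{q−1}, and consequently the associated exponential equals the generalized hypergeometric series N(t) = Σ_{n=0}^∞ t^n/x_n! = ₍q₎F₍q₎(1, 1, …, 1; 1−b_1, …, 1−b_q; t). -/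
/-!
Since `(k + 1 - bᵢ) = (1 - bᵢ) + k`, the product defining `xₙ!` splits into `q` rising factorials
`(1 - bᵢ)ₙ` divided by `(n!)^{q-1}`. Each rising factorial is `Γ(1 - bᵢ + n) / Γ(1 - bᵢ)` by the
functional equation of `Γ` (here `1 - bᵢ > 0`), and `tⁿ / xₙ!` is the `n`-th term of the
hypergeometric series because `(1)ₙ = n!` and `q ≥ 1`.
-/

open Finset

lemma Real.prod_range_add_eq_Gamma_div {x : ℝ} (hx : 0 < x) (n : ℕ) :
    ∏ k ∈ range n, (x + k) = Real.Gamma (x + n) / Real.Gamma x := by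
  induction n with
  | zero => simp [(Real.Gamma_pos_of_pos hx).ne']
  | succ n ih =>
    have hGamma : Real.Gamma (x + (n + 1 : ℕ)) = (x + n) * Real.Gamma (x + n) := by
      rw [Nat.cast_succ, ← add_assoc, Real.Gamma_add_one (by positivity)]
    rw [prod_range_succ, ih, hGamma]
    field_simp

lemma prod_range_one_add_eq_factorial (n : ℕ) : ∏ k ∈ range n, ((1 : ℝ) + k) = n.factorial := by
  rw [← Finset.prod_range_add_one_eq_factorial]
  push_cast
  exact prod_congr rfl fun k _ => add_comm _ _

lemma prod_range_prod_sub_div_pow {ι : Type*} [Fintype ι] (b : ι → ℝ) (m n : ℕ) :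
    ∏ k ∈ range n, ((∏ i, ((k + 1 : ℝ) - b i)) / (k + 1 : ℝ) ^ m) =
      (∏ i, ∏ k ∈ range n, (1 - b i + k)) / (n.factorial : ℝ) ^ m := by
  rw [prod_div_distrib, prod_pow, prod_comm, ← Finset.prod_range_add_one_eq_factorial]
  push_cast
  congr 1
  exact prod_congr rfl fun i _ => prod_congr rfl fun k _ => by ring

lemma div_div_pow_pred_eq {a : ℝ} (ha : a ≠ 0) {q : ℕ} (hq : 1 ≤ q) (P t : ℝ) :
    t / (P / a ^ (q - 1)) = a ^ q / P * t / a := by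
  obtain ⟨p, rfl⟩ := Nat.exists_eq_add_of_le' hq
  rw [Nat.add_sub_cancel, pow_succ]
  field_simp

/-- for `q ≥ 1` and reals `b₁, …, b_q < 1`, the sequence
`x₀ = 0`, `xₙ = (∏ᵢ (n − bᵢ))/n^{q−1}` (n ≥ 1) has generalized factorials
`xₙ! = (∏ᵢ Γ(1 − bᵢ + n)/Γ(1 − bᵢ))/(n!)^{q−1}`, and consequently the
associated exponential equals the generalized hypergeometric series
`N(t) = Σₙ tⁿ/xₙ! = ₍q₎F₍q₎(1,…,1; 1−b₁,…,1−b_q; t)`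
(written via Pochhammer symbols `(a)ₙ = ∏_{k<n} (a+k)`). -/
theorem stmt_13 (q : ℕ) (hq : 1 ≤ q) (b : Fin q → ℝ) (hb : ∀ i, b i < 1) :
    (∀ n : ℕ,
      ∏ k ∈ Finset.range n, ((∏ i, ((k + 1 : ℝ) - b i)) / ((k + 1 : ℝ)) ^ (q - 1)) =
      (∏ i, Real.Gamma (1 - b i + n) / Real.Gamma (1 - b i)) / (n.factorial : ℝ) ^ (q - 1)) ∧
    (∀ t : ℝ,
      ∑' n : ℕ, t ^ n /
          ∏ k ∈ Finset.range n, ((∏ i, ((k + 1 : ℝ) - b i)) / ((k + 1 : ℝ)) ^ (q - 1)) =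
      ∑' n : ℕ,
        ((∏ i : Fin q, ∏ k ∈ Finset.range n, ((1 : ℝ) + k)) /
            (∏ i : Fin q, ∏ k ∈ Finset.range n, (1 - b i + k))) *
          t ^ n / (n.factorial : ℝ)) := by
  refine ⟨fun n => ?_, fun t => tsum_congr fun n => ?_⟩
  · rw [prod_range_prod_sub_div_pow]
    congr 1
    exact prod_congr rfl fun i _ => Real.prod_range_add_eq_Gamma_div (by linarith [hb i]) n
  · rw [prod_range_prod_sub_div_pow, prod_congr rfl fun _ _ => prod_range_one_add_eq_factorial n,
      prod_const, card_univ, Fintype.card_fin]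
    exact div_div_pow_pred_eq (Nat.cast_ne_zero.mpr n.factorial_ne_zero) hq _ _
end

section
/- Let a, c, d be real numbers with c > 0, d > 0, |a| < c and a + d > 0, and consider the projective perturbation x_n = n + a n/(c n + d) for n ∈ ℕ. Define γ(x) = (√(c² x² + 2c(d − a) x + (a + d)²) − c x − a − d)/(2c). Then the perturbation is invertible with inverse given by γ: for every n ∈ ℕ, n = x_n + γ(x_n). -/
/-!
Write `q = c t + d` and `x = t + a t / q`. Clearing `q`, the discriminant
`c²x² + 2c(d − a)x + (a + d)²` is the perfect square `((q² + a d) / q)²`; for `t = n ≥ 0` we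
have `q² + a d = c n (c n + 2d) + d (a + d) ≥ 0`, so the square root is taken exactly and
`γ(x) = −a t / q`, which undoes the perturbation.
-/

/-- The projective perturbation `xₙ = n + a n/(c n + d)`. -/
noncomputable def xproj (a c d : ℝ) (n : ℕ) : ℝ := (n : ℝ) + a * n / (c * n + d)

/-- The candidate inverse modulation
`γ(x) = (√(c²x² + 2c(d−a)x + (a+d)²) − cx − a − d)/(2c)`. -/
noncomputable def γproj (a c d : ℝ) (x : ℝ) : ℝ :=
  (Real.sqrt (c ^ 2 * x ^ 2 + 2 * c * (d - a) * x + (a + d) ^ 2) - c * x - a - d) / (2 * c)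

section

variable {a c d t x : ℝ}

lemma discr_eq_sq_of_eq_perturb (hq : c * t + d ≠ 0) (hx : x = t + a * t / (c * t + d)) :
    c ^ 2 * x ^ 2 + 2 * c * (d - a) * x + (a + d) ^ 2 =
      (((c * t + d) ^ 2 + a * d) / (c * t + d)) ^ 2 := by
  subst hx
  field_simp
  ring

lemma γproj_perturb (hc : c ≠ 0) (hq : 0 < c * t + d) (hsq : 0 ≤ (c * t + d) ^ 2 + a * d) :
    γproj a c d (t + a * t / (c * t + d)) = -(a * t / (c * t + d)) := by
  rw [γproj, discr_eq_sq_of_eq_perturb hq.ne' rfl, Real.sqrt_sq (by positivity)]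
  field_simp
  ring

end

theorem stmt_17_general (a c d : ℝ) (hc : 0 < c) (hd : 0 < d)
    (had : 0 < a + d) :
    ∀ n : ℕ, (n : ℝ) = xproj a c d n + γproj a c d (xproj a c d n) := by
  intro n
  have hcn : 0 ≤ c * n := by positivity
  have hq : 0 < c * n + d := by positivity
  have hsq : 0 ≤ (c * n + d) ^ 2 + a * d := by
    have : (c * n + d) ^ 2 + a * d = c * n * (c * n + 2 * d) + d * (a + d) := by ring
    rw [this]
    positivity
  rw [xproj, γproj_perturb hc.ne' hq hsq]
  ring

/-- for reals `a c d` with `c > 0`, `d > 0`, `|a| < c`,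
`a + d > 0`, the projective perturbation `xₙ = n + a n/(c n + d)` is invertible
with inverse given by `γ`: for every `n`, `n = xₙ + γ(xₙ)`. -/
theorem stmt_17 (a c d : ℝ) (hc : 0 < c) (hd : 0 < d) (ha : |a| < c)
    (had : 0 < a + d) :
    ∀ n : ℕ, (n : ℝ) = xproj a c d n + γproj a c d (xproj a c d n) :=
  stmt_17_general a c d hc hd had
end
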